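/- arXiv:1812.03838 — 2 statements merged into one kernel-verified Lean document; each statement's English description precedes it below -/
import Mathlib

section
/- Let X, Y, Z1, Z2 and U be random variables on finite spaces. Suppose the Markov chains U - (X,Z1) - (Y,Z2), Z2 - (U,Y) - (X,Z1), and U - (Y,Z2) - (X,Z1) hold. Then I(U; Z1, Z2 | X, Y) = I(Z1; Z2 | X, Y). -/
open Finset

open Classical in
noncomputable def prob {Ω α : Type*} [Fintype Ω] (p : Ω → ℝ) (X : Ω → α) (x : α) : ℝ :=
  ∑ ω, if X ω = x then p ω else 0

noncomputable def H2 {Ω α : Type*} [Fintype Ω] [Fintype α] (p : Ω → ℝ) (X : Ω → α) : ℝ :=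
  -∑ x, prob p X x * Real.logb 2 (prob p X x)

noncomputable def condH {Ω α β : Type*} [Fintype Ω] [Fintype α] [Fintype β]
    (p : Ω → ℝ) (X : Ω → α) (Y : Ω → β) : ℝ :=
  -∑ x, ∑ y, prob p (fun ω => (X ω, Y ω)) (x, y) *
      Real.logb 2 (prob p (fun ω => (X ω, Y ω)) (x, y) / prob p Y y)

noncomputable def MI {Ω α β : Type*} [Fintype Ω] [Fintype α] [Fintype β]
    (p : Ω → ℝ) (X : Ω → α) (Y : Ω → β) : ℝ :=
  ∑ x, ∑ y, prob p (fun ω => (X ω, Y ω)) (x, y) *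
      Real.logb 2 (prob p (fun ω => (X ω, Y ω)) (x, y) / (prob p X x * prob p Y y))

noncomputable def condMI {Ω α β γ : Type*} [Fintype Ω] [Fintype α] [Fintype β] [Fintype γ]
    (p : Ω → ℝ) (X : Ω → α) (Y : Ω → β) (Z : Ω → γ) : ℝ :=
  ∑ x, ∑ y, ∑ z, prob p (fun ω => (X ω, Y ω, Z ω)) (x, y, z) *
      Real.logb 2 (prob p (fun ω => (X ω, Y ω, Z ω)) (x, y, z) * prob p Z z /
        (prob p (fun ω => (X ω, Z ω)) (x, z) * prob p (fun ω => (Y ω, Z ω)) (y, z)))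

def IsPMF {Ω : Type*} [Fintype Ω] (p : Ω → ℝ) : Prop :=
  (∀ ω, 0 ≤ p ω) ∧ ∑ ω, p ω = 1

def MarkovChain {Ω α β γ : Type*} [Fintype Ω] (p : Ω → ℝ)
    (A : Ω → α) (B : Ω → β) (C : Ω → γ) : Prop :=
  ∀ a b c, prob p (fun ω => (A ω, B ω, C ω)) (a, b, c) * prob p B b =
    prob p (fun ω => (A ω, B ω)) (a, b) * prob p (fun ω => (C ω, B ω)) (c, b)

section Helpers
open Classical
variable {Ω : Type*} [Fintype Ω] (p : Ω → ℝ)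

lemma prob_nonneg (hp : ∀ ω, 0 ≤ p ω) {α : Type*} (X : Ω → α) (x : α) : 0 ≤ prob p X x := by
  refine Finset.sum_nonneg fun ω _ => ?_
  by_cases h : X ω = x <;> simp [h, hp ω]

lemma prob_congr {α β : Type*} (S : Ω → α) (T : Ω → β) (s : α) (t : β)
    (h : ∀ ω, S ω = s ↔ T ω = t) : prob p S s = prob p T t := by
  refine Finset.sum_congr rfl fun ω _ => ?_
  simp only [eq_iff_iff.mpr (h ω)]

lemma prob_mono (hp : ∀ ω, 0 ≤ p ω) {α β : Type*} (S : Ω → α) (T : Ω → β) (s : α) (t : β)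
    (h : ∀ ω, S ω = s → T ω = t) : prob p S s ≤ prob p T t := by
  refine Finset.sum_le_sum fun ω _ => ?_
  by_cases hs : S ω = s
  · simp [hs, h ω hs]
  · by_cases ht : T ω = t <;> simp [hs, ht, hp ω]

lemma sum_prob_split {α β γ : Type*} [Fintype γ] (S : Ω → α) (T : Ω → β) (C : Ω → γ)
    (g : γ → α) (t : β) (h : ∀ ω c, S ω = g c ↔ (T ω = t ∧ C ω = c)) :
    ∑ c, prob p S (g c) = prob p T t := by
  unfold prob
  rw [Finset.sum_comm]
  refine Finset.sum_congr rfl fun ω _ => ?_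
  simp only [eq_iff_iff.mpr (h ω _)]
  by_cases hT : T ω = t
  · simp [hT]
  · simp [hT]

lemma prob_unit : prob p (fun _ => ()) () = ∑ ω, p ω := by
  simp [prob]

lemma gibbs_term {P Pz Pxz Pyz : ℝ} (hP : 0 ≤ P) (hPz : 0 ≤ Pz) (hxz : 0 ≤ Pxz) (hyz : 0 ≤ Pyz)
    (h1 : P ≠ 0 → 0 < Pz) (h2 : P ≠ 0 → 0 < Pxz) (h3 : P ≠ 0 → 0 < Pyz) :
    (P - Pxz * Pyz / Pz) / Real.log 2 ≤ P * Real.logb 2 (P * Pz / (Pxz * Pyz)) := by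
  have hlog2 : (0:ℝ) < Real.log 2 := Real.log_pos (by norm_num)
  by_cases hP0 : P = 0
  · rw [hP0, zero_mul, zero_sub]
    exact div_nonpos_of_nonpos_of_nonneg
      (neg_nonpos.mpr (div_nonneg (mul_nonneg hxz hyz) hPz)) hlog2.le
  · have hP' : 0 < P := hP.lt_of_ne (Ne.symm hP0)
    have hz := h1 hP0; have hxz' := h2 hP0; have hyz' := h3 hP0
    set q : ℝ := Pxz * Pyz / Pz with hqdef
    have hq0 : 0 < q := div_pos (mul_pos hxz' hyz') hz
    have harg : P * Pz / (Pxz * Pyz) = P / q := by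
      rw [hqdef]; field_simp
    rw [harg, Real.logb, mul_div_assoc']
    rw [div_le_div_iff_of_pos_right hlog2]
    have hle : Real.log (q / P) ≤ q / P - 1 := Real.log_le_sub_one_of_pos (div_pos hq0 hP')
    have hmul := mul_le_mul_of_nonneg_left hle hP'.le
    have heq : P * (q / P - 1) = q - P := by field_simp
    rw [heq] at hmul
    have hld : Real.log (P / q) = -(Real.log (q / P)) := by
      rw [Real.log_div (ne_of_gt hP') (ne_of_gt hq0), Real.log_div (ne_of_gt hq0) (ne_of_gt hP')]
      ring
    rw [hld]
    nlinarith

lemma condMI_nonneg {α β γ : Type*} [Fintype α] [Fintype β] [Fintype γ]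
    (hp : ∀ ω, 0 ≤ p ω) (A : Ω → α) (B : Ω → β) (C : Ω → γ) :
    0 ≤ condMI p A B C := by
  have hlog2 : (0:ℝ) < Real.log 2 := Real.log_pos (by norm_num)
  have key : ∀ x y z,
      (prob p (fun ω => (A ω, B ω, C ω)) (x, y, z) -
        prob p (fun ω => (A ω, C ω)) (x, z) * prob p (fun ω => (B ω, C ω)) (y, z) / prob p C z)
        / Real.log 2 ≤
      prob p (fun ω => (A ω, B ω, C ω)) (x, y, z) *
        Real.logb 2 (prob p (fun ω => (A ω, B ω, C ω)) (x, y, z) * prob p C z /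
          (prob p (fun ω => (A ω, C ω)) (x, z) * prob p (fun ω => (B ω, C ω)) (y, z))) := by
    intro x y z
    refine gibbs_term (prob_nonneg p hp _ _) (prob_nonneg p hp _ _) (prob_nonneg p hp _ _)
      (prob_nonneg p hp _ _) ?_ ?_ ?_
    · intro h0
      refine lt_of_lt_of_le ((prob_nonneg p hp _ _).lt_of_ne (Ne.symm h0))
        (prob_mono p hp _ _ _ _ fun ω h => ?_)
      simpa using congrArg (fun w : α × β × γ => w.2.2) h
    · intro h0
      refine lt_of_lt_of_le ((prob_nonneg p hp _ _).lt_of_ne (Ne.symm h0))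
        (prob_mono p hp _ _ _ _ fun ω h => ?_)
      simp only [Prod.mk.injEq] at h ⊢; exact ⟨h.1, h.2.2⟩
    · intro h0
      refine lt_of_lt_of_le ((prob_nonneg p hp _ _).lt_of_ne (Ne.symm h0))
        (prob_mono p hp _ _ _ _ fun ω h => ?_)
      simp only [Prod.mk.injEq] at h ⊢; exact ⟨h.2.1, h.2.2⟩
  have hsumP : ∑ x, ∑ y, ∑ z, prob p (fun ω => (A ω, B ω, C ω)) (x, y, z) = ∑ ω, p ω := by
    have h1 : ∀ x y, ∑ z, prob p (fun ω => (A ω, B ω, C ω)) (x, y, z) =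
        prob p (fun ω => (A ω, B ω)) (x, y) := fun x y =>
      sum_prob_split p _ _ C _ _ (fun ω c => by simp [Prod.ext_iff, and_assoc])
    have h2 : ∀ x, ∑ y, prob p (fun ω => (A ω, B ω)) (x, y) = prob p A x := fun x =>
      sum_prob_split p _ _ B _ _ (fun ω c => by simp [Prod.ext_iff])
    have h3 : ∑ x, prob p A x = prob p (fun _ => ()) () :=
      sum_prob_split p _ _ A _ _ (fun ω c => by simp)
    simp only [h1, h2]
    rw [h3, prob_unit]
  have hsumq : ∑ x, ∑ y, ∑ z,
      prob p (fun ω => (A ω, C ω)) (x, z) * prob p (fun ω => (B ω, C ω)) (y, z) / prob p C z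
      = ∑ ω, p ω := by
    have hyC : ∀ z, ∑ y, prob p (fun ω => (B ω, C ω)) (y, z) = prob p C z := fun z =>
      sum_prob_split p _ _ B _ _ (fun ω c => by simp [Prod.ext_iff, and_comm])
    have hxC : ∀ z, ∑ x, prob p (fun ω => (A ω, C ω)) (x, z) = prob p C z := fun z =>
      sum_prob_split p _ _ A _ _ (fun ω c => by simp [Prod.ext_iff, and_comm])
    have hzC : ∑ z, prob p C z = ∑ ω, p ω := by
      rw [sum_prob_split p C (fun _ => ()) C (fun z => z) () (fun ω c => by simp), prob_unit]
    calc ∑ x, ∑ y, ∑ z,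
          prob p (fun ω => (A ω, C ω)) (x, z) * prob p (fun ω => (B ω, C ω)) (y, z) / prob p C z
        = ∑ x, ∑ z, ∑ y,
          prob p (fun ω => (A ω, C ω)) (x, z) * prob p (fun ω => (B ω, C ω)) (y, z) / prob p C z :=
          Finset.sum_congr rfl fun x _ => Finset.sum_comm
      _ = ∑ z, ∑ x, ∑ y,
          prob p (fun ω => (A ω, C ω)) (x, z) * prob p (fun ω => (B ω, C ω)) (y, z) / prob p C z :=
          Finset.sum_comm
      _ = ∑ z, prob p C z := by
          refine Finset.sum_congr rfl fun z _ => ?_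
          have : ∀ x, ∑ y, prob p (fun ω => (A ω, C ω)) (x, z) *
              prob p (fun ω => (B ω, C ω)) (y, z) / prob p C z =
              prob p (fun ω => (A ω, C ω)) (x, z) * prob p C z / prob p C z := by
            intro x
            rw [← Finset.sum_div, ← Finset.mul_sum, hyC]
          simp only [this]
          rw [← Finset.sum_div, ← Finset.sum_mul, hxC]
          by_cases hz : prob p C z = 0
          · simp [hz]
          · field_simp
      _ = ∑ ω, p ω := hzC
  have hle : (∑ x, ∑ y, ∑ z, (prob p (fun ω => (A ω, B ω, C ω)) (x, y, z) -
        prob p (fun ω => (A ω, C ω)) (x, z) * prob p (fun ω => (B ω, C ω)) (y, z) / prob p C z)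
        / Real.log 2) ≤ condMI p A B C := by
    unfold condMI
    exact Finset.sum_le_sum fun x _ => Finset.sum_le_sum fun y _ =>
      Finset.sum_le_sum fun z _ => key x y z
  refine le_trans (le_of_eq ?_) hle
  simp only [← Finset.sum_div]
  simp only [Finset.sum_sub_distrib]
  rw [hsumP, hsumq, sub_self, zero_div]

lemma condMI_comm {α β γ : Type*} [Fintype α] [Fintype β] [Fintype γ]
    (A : Ω → α) (B : Ω → β) (C : Ω → γ) : condMI p A B C = condMI p B A C := by
  unfold condMI
  rw [Finset.sum_comm]
  refine Finset.sum_congr rfl fun y _ => Finset.sum_congr rfl fun x _ =>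
    Finset.sum_congr rfl fun z _ => ?_
  have h : prob p (fun ω => (A ω, B ω, C ω)) (x, y, z) =
      prob p (fun ω => (B ω, A ω, C ω)) (y, x, z) :=
    prob_congr p _ _ _ _ (fun ω => by simp only [Prod.mk.injEq] <;> tauto)
  rw [← h, mul_comm (prob p (fun ω => (B ω, C ω)) (y, z))]

lemma condMI_relabel_right {α β γ γ' : Type*} [Fintype α] [Fintype β] [Fintype γ] [Fintype γ']
    (A : Ω → α) (B : Ω → β) (C : Ω → γ) (e : γ ≃ γ') :
    condMI p A B (fun ω => e (C ω)) = condMI p A B C := by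
  unfold condMI
  refine Finset.sum_congr rfl fun x _ => Finset.sum_congr rfl fun y _ => ?_
  rw [← Equiv.sum_comp e]
  refine Finset.sum_congr rfl fun z _ => ?_
  have h1 : prob p (fun ω => (A ω, B ω, e (C ω))) (x, y, e z) =
      prob p (fun ω => (A ω, B ω, C ω)) (x, y, z) :=
    prob_congr p _ _ _ _ (fun ω => by simp [Prod.ext_iff])
  have h2 : prob p (fun ω => e (C ω)) (e z) = prob p C z :=
    prob_congr p _ _ _ _ (fun ω => by simp)
  have h3 : prob p (fun ω => (A ω, e (C ω))) (x, e z) =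
      prob p (fun ω => (A ω, C ω)) (x, z) :=
    prob_congr p _ _ _ _ (fun ω => by simp [Prod.ext_iff])
  have h4 : prob p (fun ω => (B ω, e (C ω))) (y, e z) =
      prob p (fun ω => (B ω, C ω)) (y, z) :=
    prob_congr p _ _ _ _ (fun ω => by simp [Prod.ext_iff])
  rw [h1, h2, h3, h4]

lemma condMI_relabel_mid {α β β' γ : Type*} [Fintype α] [Fintype β] [Fintype β'] [Fintype γ]
    (A : Ω → α) (B : Ω → β) (C : Ω → γ) (e : β ≃ β') :
    condMI p A (fun ω => e (B ω)) C = condMI p A B C := by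
  unfold condMI
  refine Finset.sum_congr rfl fun x _ => ?_
  rw [← Equiv.sum_comp e]
  refine Finset.sum_congr rfl fun y _ => Finset.sum_congr rfl fun z _ => ?_
  have h1 : prob p (fun ω => (A ω, e (B ω), C ω)) (x, e y, z) =
      prob p (fun ω => (A ω, B ω, C ω)) (x, y, z) :=
    prob_congr p _ _ _ _ (fun ω => by simp [Prod.ext_iff])
  have h4 : prob p (fun ω => (e (B ω), C ω)) (e y, z) =
      prob p (fun ω => (B ω, C ω)) (y, z) :=
    prob_congr p _ _ _ _ (fun ω => by simp [Prod.ext_iff])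
  rw [h1, h4]

lemma condMI_chain {α β γ δ : Type*} [Fintype α] [Fintype β] [Fintype γ] [Fintype δ]
    (hp : ∀ ω, 0 ≤ p ω) (A : Ω → α) (B : Ω → β) (C : Ω → γ) (D : Ω → δ) :
    condMI p A (fun ω => (B ω, C ω)) D =
      condMI p A B D + condMI p A C (fun ω => (B ω, D ω)) := by
  have hQ : ∀ a b d, prob p (fun ω => (A ω, B ω, D ω)) (a, b, d) =
      ∑ c, prob p (fun ω => (A ω, (B ω, C ω), D ω)) (a, (b, c), d) := fun a b d =>
    (sum_prob_split p _ _ C (fun c => (a, (b, c), d)) (a, b, d)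
      (fun ω c => by simp only [Prod.mk.injEq] <;> tauto)).symm
  have hR1 : condMI p A B D = ∑ a, ∑ b, ∑ c, ∑ d,
      prob p (fun ω => (A ω, (B ω, C ω), D ω)) (a, (b, c), d) *
        Real.logb 2 (prob p (fun ω => (A ω, B ω, D ω)) (a, b, d) * prob p D d /
          (prob p (fun ω => (A ω, D ω)) (a, d) * prob p (fun ω => (B ω, D ω)) (b, d))) := by
    unfold condMI
    refine Finset.sum_congr rfl fun a _ => Finset.sum_congr rfl fun b _ => ?_
    calc ∑ d, prob p (fun ω => (A ω, B ω, D ω)) (a, b, d) *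
          Real.logb 2 (prob p (fun ω => (A ω, B ω, D ω)) (a, b, d) * prob p D d /
            (prob p (fun ω => (A ω, D ω)) (a, d) * prob p (fun ω => (B ω, D ω)) (b, d)))
        = ∑ d, ∑ c, prob p (fun ω => (A ω, (B ω, C ω), D ω)) (a, (b, c), d) *
          Real.logb 2 (prob p (fun ω => (A ω, B ω, D ω)) (a, b, d) * prob p D d /
            (prob p (fun ω => (A ω, D ω)) (a, d) * prob p (fun ω => (B ω, D ω)) (b, d))) := by
          refine Finset.sum_congr rfl fun d _ => ?_
          rw [hQ a b d, Finset.sum_mul]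
      _ = ∑ c, ∑ d, prob p (fun ω => (A ω, (B ω, C ω), D ω)) (a, (b, c), d) *
          Real.logb 2 (prob p (fun ω => (A ω, B ω, D ω)) (a, b, d) * prob p D d /
            (prob p (fun ω => (A ω, D ω)) (a, d) * prob p (fun ω => (B ω, D ω)) (b, d))) :=
          Finset.sum_comm
  have hR2 : condMI p A C (fun ω => (B ω, D ω)) = ∑ a, ∑ b, ∑ c, ∑ d,
      prob p (fun ω => (A ω, (B ω, C ω), D ω)) (a, (b, c), d) *
        Real.logb 2 (prob p (fun ω => (A ω, (B ω, C ω), D ω)) (a, (b, c), d) *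
            prob p (fun ω => (B ω, D ω)) (b, d) /
          (prob p (fun ω => (A ω, B ω, D ω)) (a, b, d) *
            prob p (fun ω => ((B ω, C ω), D ω)) ((b, c), d))) := by
    unfold condMI
    refine Finset.sum_congr rfl fun a _ => ?_
    calc ∑ c, ∑ z : β × δ, prob p (fun ω => (A ω, C ω, (B ω, D ω))) (a, c, z) *
          Real.logb 2 (prob p (fun ω => (A ω, C ω, (B ω, D ω))) (a, c, z) *
              prob p (fun ω => (B ω, D ω)) z /
            (prob p (fun ω => (A ω, (B ω, D ω))) (a, z) *
              prob p (fun ω => (C ω, (B ω, D ω))) (c, z)))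
        = ∑ c, ∑ b, ∑ d, prob p (fun ω => (A ω, C ω, (B ω, D ω))) (a, c, (b, d)) *
          Real.logb 2 (prob p (fun ω => (A ω, C ω, (B ω, D ω))) (a, c, (b, d)) *
              prob p (fun ω => (B ω, D ω)) (b, d) /
            (prob p (fun ω => (A ω, (B ω, D ω))) (a, (b, d)) *
              prob p (fun ω => (C ω, (B ω, D ω))) (c, (b, d)))) :=
          Finset.sum_congr rfl fun c _ => Fintype.sum_prod_type _
      _ = ∑ b, ∑ c, ∑ d, prob p (fun ω => (A ω, C ω, (B ω, D ω))) (a, c, (b, d)) *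
          Real.logb 2 (prob p (fun ω => (A ω, C ω, (B ω, D ω))) (a, c, (b, d)) *
              prob p (fun ω => (B ω, D ω)) (b, d) /
            (prob p (fun ω => (A ω, (B ω, D ω))) (a, (b, d)) *
              prob p (fun ω => (C ω, (B ω, D ω))) (c, (b, d)))) := Finset.sum_comm
      _ = _ := by
          refine Finset.sum_congr rfl fun b _ => Finset.sum_congr rfl fun c _ =>
            Finset.sum_congr rfl fun d _ => ?_
          have e1 : prob p (fun ω => (A ω, C ω, (B ω, D ω))) (a, c, (b, d)) =
              prob p (fun ω => (A ω, (B ω, C ω), D ω)) (a, (b, c), d) :=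
            prob_congr p _ _ _ _ (fun ω => by simp only [Prod.mk.injEq] <;> tauto)
          have e2 : prob p (fun ω => (A ω, (B ω, D ω))) (a, (b, d)) =
              prob p (fun ω => (A ω, B ω, D ω)) (a, b, d) :=
            prob_congr p _ _ _ _ (fun ω => by simp only [Prod.mk.injEq] <;> tauto)
          have e3 : prob p (fun ω => (C ω, (B ω, D ω))) (c, (b, d)) =
              prob p (fun ω => ((B ω, C ω), D ω)) ((b, c), d) :=
            prob_congr p _ _ _ _ (fun ω => by simp only [Prod.mk.injEq] <;> tauto)
          rw [e1, e2, e3]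
  rw [hR1, hR2]
  unfold condMI
  simp only [← Finset.sum_add_distrib]
  refine Finset.sum_congr rfl fun a _ => ?_
  calc ∑ y : β × γ, ∑ d, prob p (fun ω => (A ω, (B ω, C ω), D ω)) (a, y, d) *
        Real.logb 2 (prob p (fun ω => (A ω, (B ω, C ω), D ω)) (a, y, d) * prob p D d /
          (prob p (fun ω => (A ω, D ω)) (a, d) * prob p (fun ω => ((B ω, C ω), D ω)) (y, d)))
      = ∑ b, ∑ c, ∑ d, prob p (fun ω => (A ω, (B ω, C ω), D ω)) (a, (b, c), d) *
        Real.logb 2 (prob p (fun ω => (A ω, (B ω, C ω), D ω)) (a, (b, c), d) * prob p D d /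
          (prob p (fun ω => (A ω, D ω)) (a, d) *
            prob p (fun ω => ((B ω, C ω), D ω)) ((b, c), d))) := Fintype.sum_prod_type _
    _ = _ := ?_
  refine Finset.sum_congr rfl fun b _ => Finset.sum_congr rfl fun c _ =>
    Finset.sum_congr rfl fun d _ => ?_
  set P := prob p (fun ω => (A ω, (B ω, C ω), D ω)) (a, (b, c), d) with hPdef
  by_cases hP : P = 0
  · rw [hP]; ring
  · have hPpos : 0 < P := (prob_nonneg p hp _ _).lt_of_ne (Ne.symm hP)
    have hd : 0 < prob p D d := lt_of_lt_of_le hPpos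
      (prob_mono p hp _ _ _ _ fun ω h => by simp [Prod.ext_iff] at h ⊢; tauto)
    have had : 0 < prob p (fun ω => (A ω, D ω)) (a, d) := lt_of_lt_of_le hPpos
      (prob_mono p hp _ _ _ _ fun ω h => by simp [Prod.ext_iff] at h ⊢; tauto)
    have hbd : 0 < prob p (fun ω => (B ω, D ω)) (b, d) := lt_of_lt_of_le hPpos
      (prob_mono p hp _ _ _ _ fun ω h => by simp [Prod.ext_iff] at h ⊢; tauto)
    have habd : 0 < prob p (fun ω => (A ω, B ω, D ω)) (a, b, d) := lt_of_lt_of_le hPpos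
      (prob_mono p hp _ _ _ _ fun ω h => by simp [Prod.ext_iff] at h ⊢; tauto)
    have hbcd : 0 < prob p (fun ω => ((B ω, C ω), D ω)) ((b, c), d) := lt_of_lt_of_le hPpos
      (prob_mono p hp _ _ _ _ fun ω h => by simp [Prod.ext_iff] at h ⊢; tauto)
    have harg1 : 0 < prob p (fun ω => (A ω, B ω, D ω)) (a, b, d) * prob p D d /
        (prob p (fun ω => (A ω, D ω)) (a, d) * prob p (fun ω => (B ω, D ω)) (b, d)) :=
      div_pos (mul_pos habd hd) (mul_pos had hbd)
    have harg2 : 0 < P * prob p (fun ω => (B ω, D ω)) (b, d) /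
        (prob p (fun ω => (A ω, B ω, D ω)) (a, b, d) *
          prob p (fun ω => ((B ω, C ω), D ω)) ((b, c), d)) :=
      div_pos (mul_pos hPpos hbd) (mul_pos habd hbcd)
    have hd' := ne_of_gt hd
    have had' := ne_of_gt had
    have hbd' := ne_of_gt hbd
    have habd' := ne_of_gt habd
    have hbcd' := ne_of_gt hbcd
    have heq : prob p (fun ω => (A ω, B ω, D ω)) (a, b, d) * prob p D d /
        (prob p (fun ω => (A ω, D ω)) (a, d) * prob p (fun ω => (B ω, D ω)) (b, d)) *
        (P * prob p (fun ω => (B ω, D ω)) (b, d) /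
          (prob p (fun ω => (A ω, B ω, D ω)) (a, b, d) *
            prob p (fun ω => ((B ω, C ω), D ω)) ((b, c), d))) =
        P * prob p D d /
          (prob p (fun ω => (A ω, D ω)) (a, d) *
            prob p (fun ω => ((B ω, C ω), D ω)) ((b, c), d)) := by
      field_simp
    rw [← mul_add, ← Real.logb_mul (ne_of_gt harg1) (ne_of_gt harg2), heq]

end Helpers

/-- Under U - (X,Z1) - (Y,Z2), Z2 - (U,Y) - (X,Z1) and U - (Y,Z2) - (X,Z1),
I(U; Z1,Z2 | X,Y) = I(Z1; Z2 | X,Y). -/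
theorem stmt1 {Ω 𝒳 𝒴 𝒵₁ 𝒵₂ 𝒰 : Type*} [Fintype Ω] [Fintype 𝒳] [Fintype 𝒴]
    [Fintype 𝒵₁] [Fintype 𝒵₂] [Fintype 𝒰]
    (p : Ω → ℝ) (hp : IsPMF p)
    (X : Ω → 𝒳) (Y : Ω → 𝒴) (Z₁ : Ω → 𝒵₁) (Z₂ : Ω → 𝒵₂) (U : Ω → 𝒰)
    (h1 : condMI p U (fun ω => (Y ω, Z₂ ω)) (fun ω => (X ω, Z₁ ω)) = 0)
    (h2 : condMI p Z₂ (fun ω => (X ω, Z₁ ω)) (fun ω => (U ω, Y ω)) = 0)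
    (h3 : condMI p U (fun ω => (X ω, Z₁ ω)) (fun ω => (Y ω, Z₂ ω)) = 0) :
    condMI p U (fun ω => (Z₁ ω, Z₂ ω)) (fun ω => (X ω, Y ω)) =
      condMI p Z₁ Z₂ (fun ω => (X ω, Y ω)) := by
  have hp0 := hp.1
  -- decompose h1
  have c1 : condMI p U (fun ω => (Y ω, Z₂ ω)) (fun ω => (X ω, Z₁ ω)) =
      condMI p U Y (fun ω => (X ω, Z₁ ω)) +
      condMI p U Z₂ (fun ω => (Y ω, (X ω, Z₁ ω))) :=
    condMI_chain p hp0 U Y Z₂ (fun ω => (X ω, Z₁ ω))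
  have n1a := condMI_nonneg p hp0 U Y (fun ω => (X ω, Z₁ ω))
  have n1b := condMI_nonneg p hp0 U Z₂ (fun ω => (Y ω, (X ω, Z₁ ω)))
  have z1 : condMI p U Z₂ (fun ω => (Y ω, (X ω, Z₁ ω))) = 0 := by linarith
  -- decompose h2
  have c2 : condMI p Z₂ (fun ω => (X ω, Z₁ ω)) (fun ω => (U ω, Y ω)) =
      condMI p Z₂ X (fun ω => (U ω, Y ω)) +
      condMI p Z₂ Z₁ (fun ω => (X ω, (U ω, Y ω))) :=
    condMI_chain p hp0 Z₂ X Z₁ (fun ω => (U ω, Y ω))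
  have n2a := condMI_nonneg p hp0 Z₂ X (fun ω => (U ω, Y ω))
  have n2b := condMI_nonneg p hp0 Z₂ Z₁ (fun ω => (X ω, (U ω, Y ω)))
  have z2 : condMI p Z₂ Z₁ (fun ω => (X ω, (U ω, Y ω))) = 0 := by linarith
  -- decompose h3
  have c3 : condMI p U (fun ω => (X ω, Z₁ ω)) (fun ω => (Y ω, Z₂ ω)) =
      condMI p U X (fun ω => (Y ω, Z₂ ω)) +
      condMI p U Z₁ (fun ω => (X ω, (Y ω, Z₂ ω))) :=
    condMI_chain p hp0 U X Z₁ (fun ω => (Y ω, Z₂ ω))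
  have n3a := condMI_nonneg p hp0 U X (fun ω => (Y ω, Z₂ ω))
  have n3b := condMI_nonneg p hp0 U Z₁ (fun ω => (X ω, (Y ω, Z₂ ω)))
  have z3 : condMI p U Z₁ (fun ω => (X ω, (Y ω, Z₂ ω))) = 0 := by linarith
  -- relabeled zeros
  have r1 : condMI p U Z₂ (fun ω => (Z₁ ω, (X ω, Y ω))) = 0 := by
    have h : condMI p U Z₂ (fun ω => (Z₁ ω, (X ω, Y ω))) =
        condMI p U Z₂ (fun ω => (Y ω, (X ω, Z₁ ω))) :=
      condMI_relabel_right p U Z₂ (fun ω => (Y ω, (X ω, Z₁ ω)))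
        (⟨fun w => (w.2.2, (w.2.1, w.1)), fun w => (w.2.2, (w.2.1, w.1)),
          fun w => rfl, fun w => rfl⟩ : (𝒴 × (𝒳 × 𝒵₁)) ≃ (𝒵₁ × (𝒳 × 𝒴)))
    rw [h, z1]
  have r2 : condMI p Z₁ Z₂ (fun ω => (U ω, (X ω, Y ω))) = 0 := by
    have hc : condMI p Z₁ Z₂ (fun ω => (U ω, (X ω, Y ω))) =
        condMI p Z₂ Z₁ (fun ω => (U ω, (X ω, Y ω))) := condMI_comm p Z₁ Z₂ _
    have h : condMI p Z₂ Z₁ (fun ω => (U ω, (X ω, Y ω))) =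
        condMI p Z₂ Z₁ (fun ω => (X ω, (U ω, Y ω))) :=
      condMI_relabel_right p Z₂ Z₁ (fun ω => (X ω, (U ω, Y ω)))
        (⟨fun w => (w.2.1, (w.1, w.2.2)), fun w => (w.2.1, (w.1, w.2.2)),
          fun w => rfl, fun w => rfl⟩ : (𝒳 × (𝒰 × 𝒴)) ≃ (𝒰 × (𝒳 × 𝒴)))
    rw [hc, h, z2]
  have r3 : condMI p Z₁ U (fun ω => (Z₂ ω, (X ω, Y ω))) = 0 := by
    have hc : condMI p Z₁ U (fun ω => (Z₂ ω, (X ω, Y ω))) =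
        condMI p U Z₁ (fun ω => (Z₂ ω, (X ω, Y ω))) := condMI_comm p Z₁ U _
    have h : condMI p U Z₁ (fun ω => (Z₂ ω, (X ω, Y ω))) =
        condMI p U Z₁ (fun ω => (X ω, (Y ω, Z₂ ω))) :=
      condMI_relabel_right p U Z₁ (fun ω => (X ω, (Y ω, Z₂ ω)))
        (⟨fun w => (w.2.2, (w.1, w.2.1)), fun w => (w.2.1, (w.2.2, w.1)),
          fun w => rfl, fun w => rfl⟩ : (𝒳 × (𝒴 × 𝒵₂)) ≃ (𝒵₂ × (𝒳 × 𝒴)))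
    rw [hc, h, z3]
  -- chain decompositions over (X,Y)
  have gl : condMI p U (fun ω => (Z₁ ω, Z₂ ω)) (fun ω => (X ω, Y ω)) =
      condMI p U Z₁ (fun ω => (X ω, Y ω)) +
      condMI p U Z₂ (fun ω => (Z₁ ω, (X ω, Y ω))) :=
    condMI_chain p hp0 U Z₁ Z₂ (fun ω => (X ω, Y ω))
  have ga : condMI p Z₁ (fun ω => (U ω, Z₂ ω)) (fun ω => (X ω, Y ω)) =
      condMI p Z₁ U (fun ω => (X ω, Y ω)) +
      condMI p Z₁ Z₂ (fun ω => (U ω, (X ω, Y ω))) :=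
    condMI_chain p hp0 Z₁ U Z₂ (fun ω => (X ω, Y ω))
  have gb : condMI p Z₁ (fun ω => (Z₂ ω, U ω)) (fun ω => (X ω, Y ω)) =
      condMI p Z₁ Z₂ (fun ω => (X ω, Y ω)) +
      condMI p Z₁ U (fun ω => (Z₂ ω, (X ω, Y ω))) :=
    condMI_chain p hp0 Z₁ Z₂ U (fun ω => (X ω, Y ω))
  have gmid : condMI p Z₁ (fun ω => (U ω, Z₂ ω)) (fun ω => (X ω, Y ω)) =
      condMI p Z₁ (fun ω => (Z₂ ω, U ω)) (fun ω => (X ω, Y ω)) :=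
    condMI_relabel_mid p Z₁ (fun ω => (Z₂ ω, U ω)) (fun ω => (X ω, Y ω))
      (⟨fun w => (w.2, w.1), fun w => (w.2, w.1), fun w => rfl, fun w => rfl⟩ :
        (𝒵₂ × 𝒰) ≃ (𝒰 × 𝒵₂))
  have gcomm : condMI p U Z₁ (fun ω => (X ω, Y ω)) =
      condMI p Z₁ U (fun ω => (X ω, Y ω)) := condMI_comm p U Z₁ _
  linarith
end

section
/- Let X, Y, U, Z be finite random variables with joint pmf p such that the Markov chain U - X - Y holds. Fix a subset S of the alphabet of U, and for each y define T(y) = {z : p(u, z | y) > 0 for some u ∈ S}. Suppose that for each y, conditioned on Y = y, the event Z ∈ T(y) occurs if and only if U ∈ S (almost surely). Then for every x and every y, y' with p(x,y) > 0 and p(x,y') > 0: Σ_{z ∈ T(y)} p(z | x, y) = Σ_{z ∈ T(y')} p(z | x, y'). -/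
open Finset

open Classical in
lemma fiber_sum {Ω 𝒰 : Type*} [Fintype Ω] (U : Ω → 𝒰) (S : Set 𝒰) (g : Ω → ℝ) :
    ∑ ω, (if U ω ∈ S then g ω else 0)
      = ∑ u ∈ Finset.univ.image U, (if u ∈ S then ∑ ω, (if U ω = u then g ω else 0) else 0) := by
  have h1 : ∀ u ∈ Finset.univ.image U,
      (if u ∈ S then ∑ ω, (if U ω = u then g ω else 0) else 0)
        = ∑ ω, (if U ω = u ∧ u ∈ S then g ω else 0) := by
    intro u _
    by_cases h : u ∈ S <;> simp [h]
  rw [Finset.sum_congr rfl h1, Finset.sum_comm]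
  apply Finset.sum_congr rfl
  intro ω _
  rw [Finset.sum_eq_single_of_mem (U ω) (Finset.mem_image_of_mem U (Finset.mem_univ ω))]
  · simp
  · intro u _ hu
    simp [Ne.symm hu]

open Classical in
lemma num_eq {Ω 𝒳 𝒴 𝒰 𝒵 : Type*} [Fintype Ω] [Fintype 𝒵]
    (p : Ω → ℝ) (hp : IsPMF p)
    (X : Ω → 𝒳) (Y : Ω → 𝒴) (U : Ω → 𝒰) (Z : Ω → 𝒵) (S : Set 𝒰)
    (hiff : ∀ ω, 0 < p ω →
      ((∃ u ∈ S, 0 < prob p (fun ω' => (U ω', Z ω', Y ω')) (u, Z ω, Y ω)) ↔ U ω ∈ S))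
    (x : 𝒳) (y : 𝒴) :
    (∑ z, if ∃ u ∈ S, 0 < prob p (fun ω => (U ω, Z ω, Y ω)) (u, z, y) then
          prob p (fun ω => (Z ω, X ω, Y ω)) (z, x, y) else 0)
      = ∑ ω, (if U ω ∈ S ∧ X ω = x ∧ Y ω = y then p ω else 0) := by
  have step1 : (∑ z, if ∃ u ∈ S, 0 < prob p (fun ω => (U ω, Z ω, Y ω)) (u, z, y) then
          prob p (fun ω => (Z ω, X ω, Y ω)) (z, x, y) else 0)
      = ∑ z, ∑ ω, (if (∃ u ∈ S, 0 < prob p (fun ω => (U ω, Z ω, Y ω)) (u, z, y)) then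
            (if (Z ω, X ω, Y ω) = (z, x, y) then p ω else 0) else 0) := by
    apply Finset.sum_congr rfl
    intro z _
    by_cases h : ∃ u ∈ S, 0 < prob p (fun ω => (U ω, Z ω, Y ω)) (u, z, y)
    · simp only [h, if_true]
      simp [prob]
    · simp [h]
  rw [step1, Finset.sum_comm]
  apply Finset.sum_congr rfl
  intro ω _
  rw [Finset.sum_eq_single_of_mem (Z ω) (Finset.mem_univ _)]
  · by_cases hpω : 0 < p ω
    · by_cases hY : Y ω = y
      · subst hY
        have hiw := hiff ω hpω
        by_cases hU : U ω ∈ S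
        · simp [hU, hiw.mpr hU, Prod.ext_iff]
        · have hT : ¬ ∃ u ∈ S, 0 < prob p (fun ω' => (U ω', Z ω', Y ω')) (u, Z ω, Y ω) :=
            fun h => hU (hiw.mp h)
          simp [hU, hT]
      · simp [hY, Prod.ext_iff]
    · have h0 : p ω = 0 := le_antisymm (not_lt.mp hpω) (hp.1 ω)
      simp [h0]
  · intro z _ hz
    simp [Ne.symm hz, Prod.ext_iff]

open Classical in
lemma key_markov {Ω 𝒳 𝒴 𝒰 : Type*} [Fintype Ω]
    (p : Ω → ℝ) (X : Ω → 𝒳) (Y : Ω → 𝒴) (U : Ω → 𝒰)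
    (hmc : MarkovChain p U X Y) (S : Set 𝒰) (x : 𝒳) (y : 𝒴) :
    (∑ ω, (if U ω ∈ S ∧ X ω = x ∧ Y ω = y then p ω else 0)) * prob p X x
      = (∑ ω, (if U ω ∈ S ∧ X ω = x then p ω else 0)) *
          prob p (fun ω => (X ω, Y ω)) (x, y) := by
  have hswap : prob p (fun ω => (Y ω, X ω)) (y, x) = prob p (fun ω => (X ω, Y ω)) (x, y) := by
    unfold prob
    apply Finset.sum_congr rfl
    intro ω _
    simp [Prod.ext_iff, and_comm]
  have hfib1 : (∑ ω, (if U ω ∈ S ∧ X ω = x ∧ Y ω = y then p ω else 0))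
      = ∑ u ∈ Finset.univ.image U,
          (if u ∈ S then prob p (fun ω => (U ω, X ω, Y ω)) (u, x, y) else 0) := by
    have h1 : ∀ ω, (if U ω ∈ S ∧ X ω = x ∧ Y ω = y then p ω else 0)
        = (if U ω ∈ S then (if X ω = x ∧ Y ω = y then p ω else 0) else 0) := by
      intro ω; by_cases h : U ω ∈ S <;> simp [h]
    rw [Finset.sum_congr rfl (fun ω _ => h1 ω), fiber_sum]
    apply Finset.sum_congr rfl
    intro u _
    by_cases h : u ∈ S
    · simp only [h, if_true, prob]
      apply Finset.sum_congr rfl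
      intro ω _
      by_cases h2 : U ω = u <;> simp [h2, Prod.ext_iff]
    · simp [h]
  have hfib2 : (∑ ω, (if U ω ∈ S ∧ X ω = x then p ω else 0))
      = ∑ u ∈ Finset.univ.image U,
          (if u ∈ S then prob p (fun ω => (U ω, X ω)) (u, x) else 0) := by
    have h1 : ∀ ω, (if U ω ∈ S ∧ X ω = x then p ω else 0)
        = (if U ω ∈ S then (if X ω = x then p ω else 0) else 0) := by
      intro ω; by_cases h : U ω ∈ S <;> simp [h]
    rw [Finset.sum_congr rfl (fun ω _ => h1 ω), fiber_sum]
    apply Finset.sum_congr rfl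
    intro u _
    by_cases h : u ∈ S
    · simp only [h, if_true, prob]
      apply Finset.sum_congr rfl
      intro ω _
      by_cases h2 : U ω = u <;> simp [h2, Prod.ext_iff]
    · simp [h]
  rw [hfib1, hfib2, Finset.sum_mul, Finset.sum_mul]
  apply Finset.sum_congr rfl
  intro u _
  by_cases h : u ∈ S
  · simp only [h, if_true]
    rw [← hswap]
    exact hmc u x y
  · simp [h]

open Classical in
/-- under U - X - Y, if the event Z ∈ T(y) coincides a.s. with U ∈ S
conditioned on Y = y, then Σ_{z∈T(y)} p(z|x,y) does not depend on y. -/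
theorem stmt16 {Ω 𝒳 𝒴 𝒰 𝒵 : Type*} [Fintype Ω] [Fintype 𝒵]
    (p : Ω → ℝ) (hp : IsPMF p)
    (X : Ω → 𝒳) (Y : Ω → 𝒴) (U : Ω → 𝒰) (Z : Ω → 𝒵)
    (hmc : MarkovChain p U X Y) (S : Set 𝒰)
    (hiff : ∀ ω, 0 < p ω →
      ((∃ u ∈ S, 0 < prob p (fun ω' => (U ω', Z ω', Y ω')) (u, Z ω, Y ω)) ↔ U ω ∈ S)) :
    ∀ x y y', 0 < prob p (fun ω => (X ω, Y ω)) (x, y) →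
      0 < prob p (fun ω => (X ω, Y ω)) (x, y') →
      (∑ z, if ∃ u ∈ S, 0 < prob p (fun ω => (U ω, Z ω, Y ω)) (u, z, y) then
          prob p (fun ω => (Z ω, X ω, Y ω)) (z, x, y) else 0) /
        prob p (fun ω => (X ω, Y ω)) (x, y) =
      (∑ z, if ∃ u ∈ S, 0 < prob p (fun ω => (U ω, Z ω, Y ω)) (u, z, y') then
          prob p (fun ω => (Z ω, X ω, Y ω)) (z, x, y') else 0) /
        prob p (fun ω => (X ω, Y ω)) (x, y') := by
  intro x y y' hxy hxy'
  rw [num_eq p hp X Y U Z S hiff x y, num_eq p hp X Y U Z S hiff x y']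
  have hk := key_markov p X Y U hmc S x y
  have hk' := key_markov p X Y U hmc S x y'
  have hPx : 0 < prob p X x := by
    refine lt_of_lt_of_le hxy ?_
    unfold prob
    apply Finset.sum_le_sum
    intro ω _
    by_cases h : (X ω, Y ω) = (x, y)
    · have hx : X ω = x := (Prod.ext_iff.mp h).1
      rw [if_pos h, if_pos hx]
    · rw [if_neg h]
      by_cases h2 : X ω = x
      · simp [h2, hp.1 ω]
      · simp [h2]
  rw [div_eq_div_iff hxy.ne' hxy'.ne']
  apply mul_right_cancel₀ (ne_of_gt hPx)
  linear_combination prob p (fun ω => (X ω, Y ω)) (x, y') * hk -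
    prob p (fun ω => (X ω, Y ω)) (x, y) * hk'
end
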